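/- Let m, λ, a, b be real constants. Define the real field f(u,v) = cos²(au), the ghost field g(u,v) = cosh²(bv), and r(u,v) = 2m − 4λ²uv + (1/32)(cosh(4bv) − cos(4au)) − (1/4)(a²u² + b²v²). Then ∂_u∂_v r = −4λ², ∂_u∂_u r = −(∂_u f)², and ∂_v∂_v r = (∂_v g)² at every point (u,v) ∈ ℝ². -/

import Mathlib

/-!
The profile `r` is `-4λ²uv` plus a function of `u` alone plus a function of `v` alone, so its
mixed derivative is `-4λ²`. The two remaining equations are the double-angle identities
`(a sin 2au)² = a²(1 - cos 4au)/2` and `(b sinh 2bv)² = b²(cosh 4bv - 1)/2`, since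
`∂_u f = -a sin 2au` and `∂_v g = b sinh 2bv`.
-/

open Real

theorem sinh_sq_eq_half_sub (x : ℝ) : sinh x ^ 2 = cosh (2 * x) / 2 - 1 / 2 := by
  rw [cosh_two_mul, cosh_sq]; ring

theorem hasDerivAt_cos_mul_sq (a x : ℝ) :
    HasDerivAt (fun t => cos (a * t) ^ 2) (-(a * sin (2 * (a * x)))) x := by
  refine ((hasDerivAt_const_mul a).cos.pow 2).congr_deriv ?_
  rw [sin_two_mul]; norm_num; ring

theorem hasDerivAt_cosh_mul_sq (b x : ℝ) :
    HasDerivAt (fun t => cosh (b * t) ^ 2) (b * sinh (2 * (b * x))) x := by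
  refine ((hasDerivAt_const_mul b).cosh.pow 2).congr_deriv ?_
  rw [sinh_two_mul]; norm_num; ring

noncomputable def cghsR (m lam a b u v : ℝ) : ℝ :=
  2 * m - 4 * lam ^ 2 * u * v + (1 / 32) * (cosh (4 * b * v) - cos (4 * a * u))
    - (1 / 4) * (a ^ 2 * u ^ 2 + b ^ 2 * v ^ 2)

section cghsR

variable (m lam a b : ℝ)

theorem hasDerivAt_cghsR_fst (u v : ℝ) :
    HasDerivAt (cghsR m lam a b · v)
      (-(4 * lam ^ 2 * v) + a / 8 * sin (4 * a * u) - a ^ 2 / 2 * u) u := by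
  refine ((((hasDerivAt_const_mul (4 * lam ^ 2)).mul_const v).const_sub (2 * m)).add
    (((hasDerivAt_const_mul (4 * a)).cos.const_sub (cosh (4 * b * v))).const_mul (1 / 32))
    |>.sub ((((hasDerivAt_pow 2 u).const_mul (a ^ 2)).add_const (b ^ 2 * v ^ 2)).const_mul
      (1 / 4))).congr_deriv ?_
  norm_num; ring

theorem hasDerivAt_cghsR_snd (u v : ℝ) :
    HasDerivAt (cghsR m lam a b u ·)
      (-(4 * lam ^ 2 * u) + b / 8 * sinh (4 * b * v) - b ^ 2 / 2 * v) v := by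
  refine (((hasDerivAt_const_mul (4 * lam ^ 2 * u)).const_sub (2 * m)).add
    (((hasDerivAt_const_mul (4 * b)).cosh.sub_const (cos (4 * a * u))).const_mul (1 / 32))
    |>.sub ((((hasDerivAt_pow 2 v).const_mul (b ^ 2)).const_add (a ^ 2 * u ^ 2)).const_mul
      (1 / 4))).congr_deriv ?_
  norm_num; ring

theorem deriv_cghsR_fst (v : ℝ) :
    deriv (cghsR m lam a b · v) =
      fun u => -(4 * lam ^ 2 * v) + a / 8 * sin (4 * a * u) - a ^ 2 / 2 * u :=
  funext fun u => (hasDerivAt_cghsR_fst m lam a b u v).deriv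

theorem deriv_cghsR_snd (u : ℝ) :
    deriv (cghsR m lam a b u ·) =
      fun v => -(4 * lam ^ 2 * u) + b / 8 * sinh (4 * b * v) - b ^ 2 / 2 * v :=
  funext fun v => (hasDerivAt_cghsR_snd m lam a b u v).deriv

theorem deriv_deriv_cghsR_mixed (u v : ℝ) :
    deriv (fun x => deriv (cghsR m lam a b x ·) v) u = -4 * lam ^ 2 := by
  simp only [deriv_cghsR_snd]
  refine (((hasDerivAt_const_mul (4 * lam ^ 2)).neg.add_const _).sub_const _).deriv.trans ?_
  ring

theorem deriv_deriv_cghsR_fst (u v : ℝ) :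
    deriv (fun x => deriv (cghsR m lam a b · v) x) u = -(a * sin (2 * (a * u))) ^ 2 := by
  simp only [deriv_cghsR_fst]
  refine ((((hasDerivAt_const_mul (4 * a)).sin.const_mul (a / 8)).const_add
    (-(4 * lam ^ 2 * v))).sub (hasDerivAt_const_mul (a ^ 2 / 2))).deriv.trans ?_
  rw [mul_pow, sin_sq_eq_half_sub]
  ring_nf

theorem deriv_deriv_cghsR_snd (u v : ℝ) :
    deriv (fun y => deriv (cghsR m lam a b u ·) y) v = (b * sinh (2 * (b * v))) ^ 2 := by
  simp only [deriv_cghsR_snd]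
  refine ((((hasDerivAt_const_mul (4 * b)).sinh.const_mul (b / 8)).const_add
    (-(4 * lam ^ 2 * u))).sub (hasDerivAt_const_mul (b ^ 2 / 2))).deriv.trans ?_
  rw [mul_pow, sinh_sq_eq_half_sub]
  ring_nf

end cghsR

/-- For the colliding real field `f(u,v) = cos²(au)` and ghost
field `g(u,v) = cosh²(bv)`, with
`r(u,v) = 2m − 4λ²uv + (1/32)(cosh(4bv) − cos(4au)) − (1/4)(a²u² + b²v²)`,
the CGHS field equations `∂_u∂_v r = −4λ²`, `∂_u∂_u r = −(∂_u f)²`,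
`∂_v∂_v r = (∂_v g)²` hold at every point of `ℝ²`. -/
theorem stmt_5 (m lam a b : ℝ)
    (f : ℝ → ℝ → ℝ) (hf : f = fun u _ => Real.cos (a * u) ^ 2)
    (g : ℝ → ℝ → ℝ) (hg : g = fun _ v => Real.cosh (b * v) ^ 2)
    (r : ℝ → ℝ → ℝ)
    (hr : r = fun u v =>
      2 * m - 4 * lam ^ 2 * u * v
        + (1 / 32) * (Real.cosh (4 * b * v) - Real.cos (4 * a * u))
        - (1 / 4) * (a ^ 2 * u ^ 2 + b ^ 2 * v ^ 2)) :
    ∀ u v : ℝ,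
      deriv (fun x => deriv (fun y => r x y) v) u = -4 * lam ^ 2 ∧
      deriv (fun x => deriv (fun x' => r x' v) x) u
        = -(deriv (fun x => f x v) u) ^ 2 ∧
      deriv (fun y => deriv (fun y' => r u y') y) v
        = (deriv (fun y => g u y) v) ^ 2 := by
  obtain rfl : r = cghsR m lam a b := hr
  subst hf hg
  intro u v
  refine ⟨deriv_deriv_cghsR_mixed m lam a b u v, ?_, ?_⟩
  · rw [(hasDerivAt_cos_mul_sq a u).deriv, neg_sq]
    exact deriv_deriv_cghsR_fst m lam a b u v
  · rw [(hasDerivAt_cosh_mul_sq b v).deriv]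
    exact deriv_deriv_cghsR_snd m lam a b u v
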